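/- For the quadratic cardioid density f with parameters μ1, μ2 ∈ ℝ and r1, r2 ≥ 0, the second trigonometric moment is ∫₀^{2π} e^{2iθ} f(θ) dθ = (2π/I)·r1·r2·e^{i(μ1+μ2)}, where I = 2π(1 + r1² + r2²). -/

import Mathlib

/-!
Expanding each cosine as a sum of two exponentials turns `e^{2iθ} f(θ)` into a trigonometric
polynomial in `θ`. Over a full period every `e^{ikθ}` with `k ≠ 0` integrates to zero, and the only
frequency-zero term comes from `r1 r2 cos(2θ - μ1 - μ2)`, namely `(r1 r2 / I) e^{i(μ1 + μ2)}`.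
-/

open intervalIntegral

section
open Complex
open scoped Real

theorem exp_mul_I_mul_cos (x y : ℂ) :
    exp (x * I) * cos y = (exp ((x + y) * I) + exp ((x - y) * I)) / 2 := by
  rw [cos, mul_div_assoc', mul_add, ← exp_add, ← exp_add]
  ring_nf

theorem integral_exp_int_mul_mul_I {k : ℤ} (hk : k ≠ 0) :
    ∫ θ in (0 : ℝ)..2 * π, exp (k * θ * I) = 0 := by
  have hkI : (k : ℂ) * I ≠ 0 := mul_ne_zero (Int.cast_ne_zero.mpr hk) I_ne_zero
  simp only [mul_right_comm (k : ℂ) _ I]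
  rw [integral_exp_mul_complex hkI, ofReal_zero, mul_zero, exp_zero,
    show (k : ℂ) * I * ↑(2 * π) = k * (2 * π * I) by push_cast; ring,
    exp_int_mul_two_pi_mul_I, sub_self, zero_div]

theorem integral_exp_int_mul_add_mul_I {k : ℤ} (hk : k ≠ 0) (c : ℂ) :
    ∫ θ in (0 : ℝ)..2 * π, exp ((k * θ + c) * I) = 0 := by
  simp_rw [add_mul, exp_add]
  rw [integral_mul_const, integral_exp_int_mul_mul_I hk, zero_mul]

theorem integral_exp_int_mul_mul_I_mul_cos (n m : ℤ) (c : ℂ) :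
    ∫ θ in (0 : ℝ)..2 * π, exp (n * θ * I) * cos (m * θ - c)
      = ((∫ θ in (0 : ℝ)..2 * π, exp (((n + m : ℤ) * θ + -c) * I))
        + ∫ θ in (0 : ℝ)..2 * π, exp (((n - m : ℤ) * θ + c) * I)) / 2 := by
  rw [← integral_add (by apply Continuous.intervalIntegrable; fun_prop)
    (by apply Continuous.intervalIntegrable; fun_prop), ← integral_div]
  refine integral_congr fun θ _ ↦ ?_
  rw [exp_mul_I_mul_cos]
  push_cast
  ring_nf

theorem integral_exp_int_mul_mul_I_mul_cos_eq_zero {n m : ℤ} (hadd : n + m ≠ 0)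
    (hsub : n - m ≠ 0) (c : ℂ) :
    ∫ θ in (0 : ℝ)..2 * π, exp (n * θ * I) * cos (m * θ - c) = 0 := by
  rw [integral_exp_int_mul_mul_I_mul_cos, integral_exp_int_mul_add_mul_I hadd,
    integral_exp_int_mul_add_mul_I hsub, add_zero, zero_div]

theorem integral_exp_int_mul_mul_I_mul_cos_self {n : ℤ} (hn : n ≠ 0) (c : ℂ) :
    ∫ θ in (0 : ℝ)..2 * π, exp (n * θ * I) * cos (n * θ - c) = π * exp (c * I) := by
  rw [integral_exp_int_mul_mul_I_mul_cos, integral_exp_int_mul_add_mul_I (by omega)]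
  simp only [sub_self, Int.cast_zero, zero_mul, zero_add, integral_const, sub_zero, real_smul,
    ofReal_mul, ofReal_ofNat]
  ring

end

open Real

theorem quadratic_cardioid_second_moment_general (μ1 μ2 r1 r2 : ℝ)
    (I : ℝ) (f : ℝ → ℝ)
    (hf : ∀ θ, f θ = (1 / I) * (1 + r1 ^ 2 + r2 ^ 2 + 2 * r1 * Real.cos (θ - μ1)
      + 2 * r2 * Real.cos (θ - μ2) + 2 * r1 * r2 * Real.cos (2 * θ - μ1 - μ2))) :
    ∫ θ in (0 : ℝ)..(2 * π), Complex.exp (2 * Complex.I * (θ : ℂ)) * (f θ : ℂ)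
      = ((2 * π / I : ℝ) : ℂ) * (r1 : ℂ) * (r2 : ℂ)
          * Complex.exp (Complex.I * ((μ1 : ℂ) + (μ2 : ℂ))) := by
  have hexpand : ∀ θ : ℝ, Complex.exp (2 * Complex.I * θ) * (f θ : ℂ) = ((1 / I : ℝ) : ℂ) *
      ((1 + r1 ^ 2 + r2 ^ 2 : ℂ) * Complex.exp ((2 : ℤ) * θ * Complex.I)
        + 2 * r1 * (Complex.exp ((2 : ℤ) * θ * Complex.I) * Complex.cos ((1 : ℤ) * θ - μ1))
        + 2 * r2 * (Complex.exp ((2 : ℤ) * θ * Complex.I) * Complex.cos ((1 : ℤ) * θ - μ2))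
        + 2 * r1 * r2 * (Complex.exp ((2 : ℤ) * θ * Complex.I)
          * Complex.cos ((2 : ℤ) * θ - (μ1 + μ2)))) := by
    intro θ
    rw [hf θ]
    push_cast
    ring_nf
  have hint : ∀ g : ℝ → ℂ, Continuous g → IntervalIntegrable g MeasureTheory.volume 0 (2 * π) :=
    fun g hg ↦ hg.intervalIntegrable _ _
  rw [integral_congr fun θ _ ↦ hexpand θ, integral_const_mul,
    integral_add (hint _ (by fun_prop)) (hint _ (by fun_prop)),
    integral_add (hint _ (by fun_prop)) (hint _ (by fun_prop)),
    integral_add (hint _ (by fun_prop)) (hint _ (by fun_prop)),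
    integral_const_mul, integral_const_mul,
    integral_const_mul, integral_const_mul,
    integral_exp_int_mul_mul_I two_ne_zero,
    integral_exp_int_mul_mul_I_mul_cos_eq_zero (by norm_num) (by norm_num),
    integral_exp_int_mul_mul_I_mul_cos_eq_zero (by norm_num) (by norm_num),
    integral_exp_int_mul_mul_I_mul_cos_self two_ne_zero, mul_comm _ Complex.I]
  push_cast
  ring

/-- The second trigonometric moment of the quadratic cardioid density. -/
theorem quadratic_cardioid_second_moment (μ1 μ2 r1 r2 : ℝ) (hr1 : 0 ≤ r1) (hr2 : 0 ≤ r2)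
    (I : ℝ) (hI : I = 2 * π * (1 + r1 ^ 2 + r2 ^ 2))
    (f : ℝ → ℝ)
    (hf : ∀ θ, f θ = (1 / I) * (1 + r1 ^ 2 + r2 ^ 2 + 2 * r1 * Real.cos (θ - μ1)
      + 2 * r2 * Real.cos (θ - μ2) + 2 * r1 * r2 * Real.cos (2 * θ - μ1 - μ2))) :
    ∫ θ in (0 : ℝ)..(2 * π), Complex.exp (2 * Complex.I * (θ : ℂ)) * (f θ : ℂ)
      = ((2 * π / I : ℝ) : ℂ) * (r1 : ℂ) * (r2 : ℂ)
          * Complex.exp (Complex.I * ((μ1 : ℂ) + (μ2 : ℂ))) :=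
  quadratic_cardioid_second_moment_general μ1 μ2 r1 r2 I f hf
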